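/- arXiv:2309.09345 — 4 statements merged into one kernel-verified Lean document; each statement's English description precedes it below -/
import Mathlib

section
/- Every connected cubic graph admits a decomposition of its edge set into a spanning tree, a collection of vertex-disjoint paths, and a collection of vertex-disjoint cycles (where the path or cycle collections may be empty). -/
open SimpleGraph

/-- The degree of a vertex (as the cardinality of its neighbor set). -/
noncomputable def deg {V : Type} (G : SimpleGraph V) (v : V) : ℕ := (G.neighborSet v).ncard

/-- A set of edges forms a matching: no two of its edges share a vertex. -/
def IsMatchingSet {V : Type} (M : Set (Sym2 V)) : Prop :=
  ∀ v : V, {e ∈ M | v ∈ e}.Subsingleton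

/-- Decomposition of `G` into a spanning tree (with edge set `T`) and a matching `M`. -/
def IsTM {V : Type} (G : SimpleGraph V) (T M : Set (Sym2 V)) : Prop :=
  T ∪ M = G.edgeSet ∧ Disjoint T M ∧
  (SimpleGraph.fromEdgeSet T).Connected ∧ (SimpleGraph.fromEdgeSet T).IsAcyclic ∧
  IsMatchingSet M

/-- `G` decomposes into a spanning tree and a matching. -/
def HasTM {V : Type} (G : SimpleGraph V) : Prop := ∃ T M, IsTM G T M

/-- Every cycle of `G` is separating: deleting its edges disconnects the graph. -/
def Separating {V : Type} (G : SimpleGraph V) : Prop :=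
  ∀ (v : V) (c : G.Walk v v), c.IsCycle →
    ¬ (G.deleteEdges {e | e ∈ c.edges}).Connected

/-! Take any spanning tree `T` of `G`. In the complement `R = G \ T` every vertex has degree at
most `2`, because it has degree `3` in `G` and at least `1` in `T`. The bridges of `R` form a
forest of maximum degree `2`, i.e. vertex-disjoint paths. Every other edge of `R` lies on a cycle
of `R`, whose two edges at each of its vertices are again non-bridges; as degrees in `R` are at
most `2`, the non-bridges meet every vertex in either `0` or `2` edges. -/

namespace SimpleGraph

variable {V : Type} {G H R : SimpleGraph V} {S : Set (Sym2 V)}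

lemma deg_mono [Finite V] (h : H ≤ G) (v : V) : deg H v ≤ deg G v :=
  Set.ncard_le_ncard (fun _ hu ↦ h hu)

lemma deg_fromEdgeSet_le [Finite V] (hS : S ⊆ R.edgeSet) (v : V) :
    deg (fromEdgeSet S) v ≤ deg R v :=
  deg_mono ((fromEdgeSet_le _).mpr (Set.sdiff_subset.trans hS)) v

lemma deg_sdiff_add_deg [Finite V] (h : H ≤ G) (v : V) : deg (G \ H) v + deg H v = deg G v :=
  Set.ncard_sdiff_add_ncard_of_subset fun _ hu ↦ h hu

lemma deg_sdiff_lt_of_preconnected [Finite V] (hle : H ≤ G) (hH : H.Preconnected) {u v : V}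
    (huv : G.Adj v u) : deg (G \ H) v < deg G v := by
  have := nontrivial_of_ne v u huv.ne
  obtain ⟨w, hw⟩ := hH.exists_adj_of_nontrivial v
  have hpos : 0 < deg H v := (Set.ncard_pos).mpr ⟨w, hw⟩
  have := deg_sdiff_add_deg hle v
  omega

lemma isAcyclic_fromEdgeSet_of_forall_isBridge (hS : S ⊆ R.edgeSet)
    (hb : ∀ e ∈ S, R.IsBridge e) : (fromEdgeSet S).IsAcyclic :=
  isAcyclic_iff_forall_isBridge.mpr fun e he ↦
    (hb e (edgeSet_fromEdgeSet S ▸ he).1).anti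
      ((fromEdgeSet_le _).mpr (Set.sdiff_subset.trans hS))

lemma two_le_deg_fromEdgeSet_not_isBridge [Finite V] {u v : V}
    (huv : (fromEdgeSet {e ∈ R.edgeSet | ¬ R.IsBridge e}).Adj v u) :
    2 ≤ deg (fromEdgeSet {e ∈ R.edgeSet | ¬ R.IsBridge e}) v := by
  obtain ⟨⟨hR, hnb⟩, -⟩ := (fromEdgeSet_adj _).mp huv
  rw [isBridge_iff_forall_cycle_notMem hR] at hnb
  push Not at hnb
  obtain ⟨w, p, hp, hvu⟩ := hnb
  rw [← hp.ncard_neighborSet_toSubgraph_eq_two (p.fst_mem_support_of_mem_edges hvu)]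
  refine Set.ncard_le_ncard fun x hx ↦ ?_
  have hx : s(v, x) ∈ p.edges := Walk.adj_toSubgraph_iff_mem_edges.mp hx
  exact (fromEdgeSet_adj _).mpr
    ⟨⟨p.edges_subset_edgeSet hx, fun hb ↦ hb.notMem_edges_of_isCycle hp hx⟩,
      (p.adj_of_mem_edges hx).ne⟩

lemma deg_fromEdgeSet_not_isBridge_eq_zero_or_two [Finite V] (hR : ∀ v, deg R v ≤ 2) (v : V) :
    deg (fromEdgeSet {e ∈ R.edgeSet | ¬ R.IsBridge e}) v = 0 ∨
      deg (fromEdgeSet {e ∈ R.edgeSet | ¬ R.IsBridge e}) v = 2 := by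
  obtain h | ⟨u, hu⟩ := Set.eq_empty_or_nonempty
    ((fromEdgeSet {e ∈ R.edgeSet | ¬ R.IsBridge e}).neighborSet v)
  · simp [deg, h]
  · have hle := (deg_fromEdgeSet_le (Set.sep_subset R.edgeSet (¬ R.IsBridge ·)) v).trans (hR v)
    have := two_le_deg_fromEdgeSet_not_isBridge hu
    omega

end SimpleGraph

/-- Every connected cubic graph decomposes into a spanning tree,
a collection of vertex-disjoint paths (a linear forest) and a collection of
vertex-disjoint cycles (a 2-regular-or-isolated graph). -/
theorem stmt_1 {V : Type} [Finite V] (G : SimpleGraph V) (hconn : G.Connected)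
    (hcubic : ∀ v, deg G v = 3) :
    ∃ T P C : Set (Sym2 V),
      T ∪ P ∪ C = G.edgeSet ∧ Disjoint T P ∧ Disjoint T C ∧ Disjoint P C ∧
      (SimpleGraph.fromEdgeSet T).Connected ∧ (SimpleGraph.fromEdgeSet T).IsAcyclic ∧
      (SimpleGraph.fromEdgeSet P).IsAcyclic ∧
      (∀ v, deg (SimpleGraph.fromEdgeSet P) v ≤ 2) ∧
      (∀ v, deg (SimpleGraph.fromEdgeSet C) v = 0 ∨ deg (SimpleGraph.fromEdgeSet C) v = 2) := by
  obtain ⟨H, hHG, hH⟩ := hconn.exists_isTree_le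
  have hR : ∀ v, deg (G \ H) v ≤ 2 := fun v ↦ by
    obtain ⟨u, hu⟩ : (G.neighborSet v).Nonempty :=
      Set.nonempty_of_ncard_ne_zero (by rw [← deg, hcubic v]; decide)
    have hlt := deg_sdiff_lt_of_preconnected hHG hH.connected.preconnected hu
    rw [hcubic v] at hlt
    omega
  set R := G \ H
  have hRG : R.edgeSet = G.edgeSet \ H.edgeSet := edgeSet_sdiff _ _
  have hHG' := edgeSet_mono hHG
  refine ⟨H.edgeSet, {e ∈ R.edgeSet | R.IsBridge e}, {e ∈ R.edgeSet | ¬ R.IsBridge e},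
    ?_, ?_, ?_, ?_, ?_, ?_, ?_, ?_, deg_fromEdgeSet_not_isBridge_eq_zero_or_two hR⟩
  · ext e
    simp only [Set.mem_union, Set.mem_ofPred_eq, hRG, Set.mem_sdiff]
    have := @hHG' e
    tauto
  · exact Set.disjoint_left.mpr fun e he hP ↦ (hRG ▸ hP.1).2 he
  · exact Set.disjoint_left.mpr fun e he hC ↦ (hRG ▸ hC.1).2 he
  · exact Set.disjoint_left.mpr fun e hP hC ↦ hC.2 hP.2
  · simpa using hH.connected
  · simpa using hH.isAcyclic
  · exact isAcyclic_fromEdgeSet_of_forall_isBridge (Set.sep_subset _ _) fun e he ↦ he.2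
  · exact fun v ↦ (deg_fromEdgeSet_le (Set.sep_subset _ _) v).trans (hR v)
end

section
/- The following are equivalent: (a) every connected graph with degrees in {2,3} in which every cycle is separating decomposes into a spanning tree and a matching; (b) every connected graph with degrees in {1,2,3} in which every cycle is separating decomposes into a spanning tree and a matching. -/
/-!
Attach a triangle at every leaf of a graph `G` of `S_{1,3}`: leaves get degree 3, the new
vertices degree 2, and all other degrees are unchanged. Contracting the triangles is a retraction
onto `G` that collapses every new edge. A cycle through a new vertex is separating because deleting
it isolates that degree-2 vertex; any other cycle is a cycle of `G`, and contracting maps a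
connected complement of it onto a connected complement in `G`. Likewise, a spanning tree and
matching of the new graph restrict to a spanning tree and matching of `G`, the tree staying
connected because contraction maps it onto its restriction. The converse implication is trivial
since `S_{2,3} ⊆ S_{1,3}`.
-/

open SimpleGraph

open Function

namespace SimpleGraph

variable {V W : Type} {G : SimpleGraph V} {H : SimpleGraph W}

lemma Reachable.map_of_eq_or_adj {K : SimpleGraph W} (φ : W → V)
    (hφ : ∀ ⦃a b⦄, K.Adj a b → φ a = φ b ∨ G.Adj (φ a) (φ b)) {a b : W}
    (h : K.Reachable a b) : G.Reachable (φ a) (φ b) := by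
  obtain ⟨p⟩ := h
  induction p with
  | nil => rfl
  | cons hab _ ih => exact (hφ hab).elim (fun h => h ▸ ih) (fun h => h.reachable.trans ih)

lemma Connected.of_surjective_of_eq_or_adj {K : SimpleGraph W} (φ : W → V) (hs : Surjective φ)
    (hφ : ∀ ⦃a b⦄, K.Adj a b → φ a = φ b ∨ G.Adj (φ a) (φ b)) (hK : K.Connected) :
    G.Connected where
  preconnected u v := by
    obtain ⟨a, rfl⟩ := hs u
    obtain ⟨b, rfl⟩ := hs v
    exact (hK.preconnected a b).map_of_eq_or_adj φ hφ
  nonempty := hK.nonempty.map φ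

lemma Walk.exists_map_eq_of_forall_mem_range (f : G ↪g H) {a b : W} (p : H.Walk a b)
    (hp : ∀ x ∈ p.support, x ∈ Set.range f) {u v : V} (ha : f u = a) (hb : f v = b) :
    ∃ q : G.Walk u v, q.map f.toHom = p.copy ha.symm hb.symm := by
  induction p generalizing u with
  | nil =>
    subst ha
    obtain rfl := f.injective hb
    exact ⟨.nil, rfl⟩
  | cons h p ih =>
    subst ha
    obtain ⟨w, rfl⟩ := hp _ (List.mem_cons_of_mem _ p.start_mem_support)
    obtain ⟨q, hq⟩ := ih (fun x hx => hp x (List.mem_cons_of_mem _ hx)) rfl hb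
    exact ⟨.cons (f.map_adj_iff.mp h) q, by simp [hq]⟩

lemma Walk.IsCycle.isIsolated_deleteEdges {u x : V} {c : G.Walk u u} (hc : c.IsCycle)
    (hx : x ∈ c.support) (hfin : (G.neighborSet x).Finite) (h2 : (G.neighborSet x).ncard = 2) :
    (G.deleteEdges {e | e ∈ c.edges}).IsIsolated x := by
  have hall : c.toSubgraph.neighborSet x = G.neighborSet x :=
    Set.eq_of_subset_of_ncard_le (c.toSubgraph.neighborSet_subset x)
      (by rw [h2, ncard_neighborSet_toSubgraph_eq_two hc hx]) hfin
  intro y hy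
  rw [deleteEdges_adj] at hy
  exact hy.2 (adj_toSubgraph_iff_mem_edges.mp (hall ▸ hy.1 : y ∈ c.toSubgraph.neighborSet x))

end SimpleGraph

section Retraction

variable {V W : Type} {G : SimpleGraph V} {H : SimpleGraph W}

structure IsContractingRetraction (f : G ↪g H) (r : W → V) : Prop where
  retract : ∀ v, r (f v) = v
  adj : ∀ ⦃a b⦄, H.Adj a b → r a = r b ∨ a = f (r a) ∧ b = f (r b)

variable {f : G ↪g H} {r : W → V}

lemma IsContractingRetraction.connected (hr : IsContractingRetraction f r)
    {K : SimpleGraph W} {G' : SimpleGraph V} (hKH : K ≤ H)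
    (hKG' : ∀ u v, K.Adj (f u) (f v) → G'.Adj u v) (hK : K.Connected) : G'.Connected := by
  refine hK.of_surjective_of_eq_or_adj r (fun v => ⟨f v, hr.retract v⟩) fun a b hab => ?_
  obtain h | ⟨ha, hb⟩ := hr.adj (hKH hab)
  · exact .inl h
  · rw [ha, hb] at hab
    exact .inr (hKG' _ _ hab)

lemma IsMatchingSet.preimage {M : Set (Sym2 W)} (hM : IsMatchingSet M) {φ : V → W}
    (hφ : Injective φ) : IsMatchingSet (Sym2.map φ ⁻¹' M) := fun v _ he _ he' =>
  Sym2.map.injective hφ <|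
    hM (φ v) ⟨he.1, Sym2.mem_map.2 ⟨v, he.2, rfl⟩⟩ ⟨he'.1, Sym2.mem_map.2 ⟨v, he'.2, rfl⟩⟩

lemma IsTM.of_isContractingRetraction (hr : IsContractingRetraction f r) {T M : Set (Sym2 W)}
    (h : IsTM H T M) : IsTM G (Sym2.map f ⁻¹' T) (Sym2.map f ⁻¹' M) := by
  obtain ⟨hunion, hdisj, hconn, hacyc, hM⟩ := h
  refine ⟨by rw [← Set.preimage_union, hunion, f.preimage_edgeSet], hdisj.preimage _, ?_, ?_,
    hM.preimage f.injective⟩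
  · refine hr.connected (fun a b hab => ?_) (fun u v huv => ?_) hconn
    · rw [fromEdgeSet_adj] at hab
      exact hunion.subset (Set.mem_union_left M hab.1)
    · rw [fromEdgeSet_adj] at huv ⊢
      exact ⟨huv.1, fun h => huv.2 (congrArg f h)⟩
  · refine hacyc.comap ⟨f, fun {u v} huv => ?_⟩ f.injective
    rw [fromEdgeSet_adj] at huv ⊢
    exact ⟨huv.1, fun h => huv.2 (f.injective h)⟩

lemma HasTM.of_isContractingRetraction (hr : IsContractingRetraction f r) (h : HasTM H) :
    HasTM G :=
  let ⟨_, _, hTM⟩ := h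
  ⟨_, _, hTM.of_isContractingRetraction hr⟩

lemma Separating.of_isContractingRetraction [Finite W] (hr : IsContractingRetraction f r)
    (hdeg : ∀ x ∉ Set.range f, deg H x = 2) (hG : Separating G) : Separating H := by
  intro a c hc hconn
  by_cases hrange : ∀ x ∈ c.support, x ∈ Set.range f
  · obtain ⟨u, rfl⟩ := hrange a c.start_mem_support
    obtain ⟨q, hq⟩ := c.exists_map_eq_of_forall_mem_range f hrange rfl rfl
    rw [Walk.copy_rfl_rfl] at hq
    refine hG u q ((Walk.isCycle_map_iff_of_injective f.injective).mp (hq ▸ hc)) ?_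
    refine hr.connected (deleteEdges_le _) (fun v w hvw => ?_) hconn
    rw [deleteEdges_adj] at hvw ⊢
    refine ⟨f.map_adj_iff.mp hvw.1, fun hmem => hvw.2 ?_⟩
    rw [← hq, Walk.edges_map]
    exact List.mem_map_of_mem (f := Sym2.map f) hmem
  · obtain ⟨x, hx, hxf⟩ := not_forall₂.mp hrange
    obtain ⟨y, hxy⟩ : (H.neighborSet x).Nonempty :=
      Set.nonempty_of_ncard_ne_zero (by rw [← deg, hdeg x hxf]; decide)
    have : Nontrivial W := nontrivial_of_ne x y hxy.ne
    exact hconn.preconnected.not_isIsolated x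
      (hc.isIsolated_deleteEdges hx (Set.toFinite _) (hdeg x hxf))

end Retraction

section AttachTriangles

open Sum

variable {V : Type} {G : SimpleGraph V}

abbrev Leaf (G : SimpleGraph V) : Type := {v : V // deg G v = 1}

/-- `G` with a triangle `v, inr (v, true), inr (v, false)` attached at every leaf `v`. -/
def attachTriangles (G : SimpleGraph V) : SimpleGraph (V ⊕ Leaf G × Bool) where
  Adj
    | inl u, inl w => G.Adj u w
    | inl u, inr q => q.1.1 = u
    | inr q, inl u => q.1.1 = u
    | inr q, inr q' => q.1 = q'.1 ∧ q.2 ≠ q'.2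
  symm := ⟨by
    rintro (u | q) (w | q') h
    exacts [h.symm, h, h, ⟨h.1.symm, h.2.symm⟩]⟩
  loopless := ⟨by
    rintro (u | q) h
    exacts [G.loopless.irrefl u h, h.2 rfl]⟩

def inlEmbedding (G : SimpleGraph V) : G ↪g attachTriangles G := ⟨.inl, Iff.rfl⟩

def contractTriangles (G : SimpleGraph V) : V ⊕ Leaf G × Bool → V := Sum.elim id (·.1.1)

lemma isContractingRetraction_contractTriangles :
    IsContractingRetraction (inlEmbedding G) (contractTriangles G) where
  retract _ := rfl
  adj := by
    rintro (u | q) (w | q') h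
    exacts [.inr ⟨rfl, rfl⟩, .inl (Eq.symm h), .inl h, .inl (congrArg Subtype.val h.1)]

lemma connected_attachTriangles (hG : G.Connected) : (attachTriangles G).Connected := by
  have reach_inl (x) : (attachTriangles G).Reachable x (inl (contractTriangles G x)) := by
    rcases x with u | q
    exacts [.rfl, Adj.reachable (show q.1.1 = q.1.1 from rfl)]
  have := hG.nonempty
  exact ⟨fun x y => (reach_inl x).trans <|
    ((hG.preconnected _ _).map (inlEmbedding G).toHom).trans (reach_inl y).symm⟩

lemma neighborSet_attachTriangles_inr (q : Leaf G × Bool) :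
    (attachTriangles G).neighborSet (inr q) = {inl q.1.1, inr (q.1, !q.2)} := by
  ext (w | q')
  · simp [attachTriangles, eq_comm]
  · obtain ⟨l, b⟩ := q
    obtain ⟨l', b'⟩ := q'
    cases b <;> cases b' <;> simp [attachTriangles, eq_comm]

lemma neighborSet_attachTriangles_inl (u : V) :
    (attachTriangles G).neighborSet (inl u) =
      inl '' G.neighborSet u ∪ inr '' {q | q.1.1 = u} := by
  ext (w | q) <;> simp [attachTriangles]

lemma deg_attachTriangles_inr (q : Leaf G × Bool) : deg (attachTriangles G) (inr q) = 2 := by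
  rw [deg, neighborSet_attachTriangles_inr, Set.ncard_pair (by simp)]

lemma ncard_setOf_fst_val_eq (u : V) :
    {q : Leaf G × Bool | q.1.1 = u}.ncard = if deg G u = 1 then 2 else 0 := by
  split_ifs with hu
  · have : {q : Leaf G × Bool | q.1.1 = u} = {(⟨u, hu⟩, true), (⟨u, hu⟩, false)} := by
      ext ⟨⟨v, hv⟩, b⟩
      cases b <;> simp [eq_comm]
    rw [this, Set.ncard_pair (by simp)]
  · convert Set.ncard_empty (Leaf G × Bool)
    exact Set.eq_empty_of_forall_notMem fun q (hq : q.1.1 = u) => hu (hq ▸ q.1.2)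

lemma deg_attachTriangles_inl [Finite V] (u : V) :
    deg (attachTriangles G) (inl u) = if deg G u = 1 then 3 else deg G u := by
  rw [deg, neighborSet_attachTriangles_inl, Set.ncard_union_eq Set.disjoint_image_inl_image_inr,
    Set.ncard_image_of_injective _ inl_injective, Set.ncard_image_of_injective _ inr_injective,
    ncard_setOf_fst_val_eq, ← deg]
  split_ifs with hu <;> omega

lemma deg_attachTriangles_mem [Finite V] (hdeg : ∀ v, 1 ≤ deg G v ∧ deg G v ≤ 3) :
    ∀ x, deg (attachTriangles G) x = 2 ∨ deg (attachTriangles G) x = 3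
  | inl u => by
    rw [deg_attachTriangles_inl]
    have := hdeg u
    split_ifs <;> omega
  | inr q => .inl (deg_attachTriangles_inr q)

lemma Separating.attachTriangles [Finite V] (hG : Separating G) :
    Separating (attachTriangles G) := by
  refine hG.of_isContractingRetraction isContractingRetraction_contractTriangles ?_
  rintro (u | q) hx
  exacts [absurd ⟨u, rfl⟩ hx, deg_attachTriangles_inr q]

end AttachTriangles

/-- The 2-Decomposition Conjecture for `S_{2,3}` (degrees in
{2,3}, every cycle separating) is equivalent to its extension to `S_{1,3}`
(degrees in {1,2,3}). -/
theorem stmt_7 :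
    (∀ (V : Type), Finite V → ∀ G : SimpleGraph V, G.Connected →
        (∀ v, deg G v = 2 ∨ deg G v = 3) → Separating G → HasTM G) ↔
    (∀ (V : Type), Finite V → ∀ G : SimpleGraph V, G.Connected →
        (∀ v, 1 ≤ deg G v ∧ deg G v ≤ 3) → Separating G → HasTM G) := by
  constructor
  · intro h23 V hV G hG hdeg hsep
    exact (h23 _ inferInstance _ (connected_attachTriangles hG) (deg_attachTriangles_mem hdeg)
      hsep.attachTriangles).of_isContractingRetraction isContractingRetraction_contractTriangles
  · intro h13 V hV G hG hdeg hsep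
    exact h13 V hV G hG (fun v => by rcases hdeg v with h | h <;> omega) hsep
end

section
/- A minimum counterexample G ∈ S_{1,3} to the 2-Decomposition Conjecture contains no parallel edges, i.e., G is a simple graph. -/
/-- A loopless multigraph: an edge type `E` with an endpoint map into unordered
pairs of distinct vertices. Parallel edges are allowed. -/
structure Multigraph (V E : Type) where
  ends : E → Sym2 V
  loopless : ∀ e, ¬ (ends e).IsDiag

namespace Multigraph

variable {V E : Type}

/-- Adjacency via an edge belonging to the edge subset `S`. -/
def AdjOn (G : Multigraph V E) (S : Set E) (u v : V) : Prop :=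
  ∃ e ∈ S, G.ends e = s(u, v)

/-- Adjacency in `G`. -/
def Adj (G : Multigraph V E) (u v : V) : Prop := G.AdjOn Set.univ u v

/-- The spanning subgraph with edge set `S` is connected. -/
def ConnOn (G : Multigraph V E) (S : Set E) : Prop :=
  Nonempty V ∧ ∀ u v : V, Relation.ReflTransGen (G.AdjOn S) u v

/-- `G` is connected. -/
def Connected (G : Multigraph V E) : Prop := G.ConnOn Set.univ

/-- The degree of a vertex: the number of edges incident to it. -/
noncomputable def deg (G : Multigraph V E) (v : V) : ℕ :=
  Nat.card {e : E // v ∈ G.ends e}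

/-- A cycle in `G`, given as a list of (vertex, edge) pairs: the vertices are
distinct, the edges are distinct, there are at least two of them (so pairs of
parallel edges count as cycles), and the `i`-th edge joins the `i`-th vertex to
the next one (cyclically). -/
def IsCycle (G : Multigraph V E) (c : List (V × E)) : Prop :=
  (c.map Prod.fst).Nodup ∧ (c.map Prod.snd).Nodup ∧ 2 ≤ c.length ∧
  ∀ i : Fin c.length,
    G.ends (c.get i).2 =
      s((c.get i).1, (c.get ⟨(i + 1) % c.length, Nat.mod_lt _ i.pos⟩).1)

/-- Every cycle of `G` is separating: deleting its edges disconnects `G`. -/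
def Separating (G : Multigraph V E) : Prop :=
  ∀ c : List (V × E), G.IsCycle c → ¬ G.ConnOn {e | e ∉ c.map Prod.snd}

/-- The class `S_{1,3}`: connected, every cycle separating, degrees in `{1,2,3}`. -/
def S13 (G : Multigraph V E) : Prop :=
  G.Connected ∧ (∀ v, 1 ≤ G.deg v ∧ G.deg v ≤ 3) ∧ G.Separating

/-- The edge set `T` is a spanning tree of `G`. -/
def IsTreeSet (G : Multigraph V E) (T : Set E) : Prop :=
  G.ConnOn T ∧ ¬ ∃ c, G.IsCycle c ∧ ∀ p ∈ c, p.2 ∈ T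

/-- The edge set `M` is a matching of `G`. -/
def IsMatchingSet (G : Multigraph V E) (M : Set E) : Prop :=
  ∀ e ∈ M, ∀ f ∈ M, e ≠ f → ∀ v : V, ¬ (v ∈ G.ends e ∧ v ∈ G.ends f)

/-- `G` decomposes into a spanning tree and a matching. -/
def HasTM (G : Multigraph V E) : Prop :=
  ∃ T M : Set E, T ∪ M = Set.univ ∧ Disjoint T M ∧
    G.IsTreeSet T ∧ G.IsMatchingSet M

/-- The parameter `φ(G) = |V(G)| + |E(G)|`. -/
noncomputable def phi (G : Multigraph V E) : ℕ := Nat.card V + Nat.card E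

/-- `G` is a minimum counterexample (w.r.t. `φ`) to the statement that every
graph in `S_{1,3}` decomposes into a spanning tree and a matching. -/
def MinCex (G : Multigraph V E) : Prop :=
  G.S13 ∧ ¬ G.HasTM ∧
  ∀ (W F : Type), Finite W → Finite F → ∀ H : Multigraph W F,
    H.S13 → ¬ H.HasTM → G.phi ≤ H.phi

end Multigraph

/-! If `e` and `f` are parallel, deleting `f` leaves a graph in `S_{1,3}` with smaller `φ`, so by
minimality it has a spanning tree `T` and a complementary matching `M`. Move the edges of `M` that
meet `f` into `T` and put `f` into the matching. The result is a decomposition of `G`: a cycle of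
the new tree avoids `f`, so as the 2-cycle `e f` is separating it avoids `e` as well; as the ends
of `f` have degree at most 3, it then avoids the ends of `f`, hence consists of edges of `T`. -/

lemma add_mod_ne_self {n i k : ℕ} (hi : i < n) (hk₀ : 0 < k) (hkn : k < n) : (i + k) % n ≠ i := by
  intro h
  have : i + k ≡ i + 0 [MOD n] := by
    rw [Nat.ModEq, h, Nat.add_zero, Nat.mod_eq_of_lt hi]
  have := Nat.ModEq.add_left_cancel' i this
  rw [Nat.ModEq, Nat.mod_eq_of_lt hkn, Nat.zero_mod] at this
  omega

lemma exists_map_eq_of_forall_mem {α β : Type*} {S : Set β} (C : List (α × β))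
    (hC : ∀ p ∈ C, p.2 ∈ S) : ∃ C' : List (α × S), C'.map (fun p => (p.1, p.2.1)) = C := by
  induction C with
  | nil => exact ⟨[], rfl⟩
  | cons p C ih =>
    obtain ⟨C', hC'⟩ := ih fun q hq => hC q (List.mem_cons_of_mem _ hq)
    exact ⟨(p.1, ⟨p.2, hC p List.mem_cons_self⟩) :: C', by simp [hC']⟩

namespace Multigraph

variable {V E : Type} (G : Multigraph V E)

instance (S : Set E) : Std.Symm (G.AdjOn S) where
  symm _ _ := fun ⟨e, he, h⟩ => ⟨e, he, h.trans Sym2.eq_swap⟩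

lemma reflTransGen_adjOn_mono {S S' : Set E} (h : S ⊆ S') :
    Relation.ReflTransGen (G.AdjOn S) ≤ Relation.ReflTransGen (G.AdjOn S') :=
  Relation.ReflTransGen.mono fun _ _ ⟨e, he, hends⟩ => ⟨e, h he, hends⟩

def restrict (S : Set E) : Multigraph V S where
  ends e := G.ends e
  loopless e := G.loopless e

lemma adjOn_restrict (S : Set E) (T : Set S) :
    (G.restrict S).AdjOn T = G.AdjOn (Subtype.val '' T) := by
  ext u v
  constructor
  · rintro ⟨e, he, h⟩
    exact ⟨e, ⟨e, he, rfl⟩, h⟩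
  · rintro ⟨_, ⟨e, he, rfl⟩, h⟩
    exact ⟨e, he, h⟩

lemma connOn_restrict (S : Set E) (T : Set S) :
    (G.restrict S).ConnOn T ↔ G.ConnOn (Subtype.val '' T) := by
  rw [ConnOn, ConnOn, adjOn_restrict]

lemma deg_restrict_le [Finite E] (S : Set E) (v : V) : (G.restrict S).deg v ≤ G.deg v :=
  Nat.card_le_card_of_injective (fun e => (⟨e.1.1, e.2⟩ : {e // v ∈ G.ends e})) fun _ _ h =>
    Subtype.ext (Subtype.ext (congrArg Subtype.val h :))

lemma card_le_deg [Finite E] (s : Finset E) (v : V) (hs : ∀ e ∈ s, v ∈ G.ends e) :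
    s.card ≤ G.deg v := by
  rw [deg, ← Set.coe_ofPred, Nat.card_coe_set_eq, ← Set.ncard_coe_finset]
  exact Set.ncard_le_ncard hs

lemma phi_restrict_lt [Finite E] {S : Set E} (hS : S ≠ Set.univ) :
    (G.restrict S).phi < G.phi := by
  have := Set.ncard_lt_card hS
  rw [phi, phi, Nat.card_coe_set_eq]
  omega

lemma isCycle_restrict_iff {S : Set E} (C : List (V × S)) :
    (G.restrict S).IsCycle C ↔ G.IsCycle (C.map fun p => (p.1, p.2.1)) := by
  have hsnd : (C.map fun p => (p.2 : E)).Nodup ↔ (C.map Prod.snd).Nodup := by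
    rw [← List.nodup_map_iff Subtype.val_injective, List.map_map]
    rfl
  simp [IsCycle, restrict, List.map_map, Function.comp_def, Fin.forall_iff, hsnd]

lemma isCycle_pair {e f : E} (hef : e ≠ f) {u v : V} (he : G.ends e = s(u, v))
    (hf : G.ends f = s(u, v)) : G.IsCycle [(u, e), (v, f)] := by
  have huv : u ≠ v := fun h => G.loopless e (by rw [he, h]; exact Sym2.mk_isDiag_iff.2 rfl)
  refine ⟨by simp [huv], by simp [hef], le_rfl, ?_⟩
  rintro ⟨i, hi⟩
  change i < 2 at hi
  interval_cases i
  · simpa using he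
  · simp [hf, Sym2.eq_swap]

lemma exists_decomposition_of_hasTM_restrict {S : Set E} (h : (G.restrict S).HasTM) :
    ∃ T M : Set E, T ∪ M = S ∧ Disjoint T M ∧ G.IsTreeSet T ∧ G.IsMatchingSet M := by
  obtain ⟨T, M, hunion, hdisj, ⟨hTconn, hTacyc⟩, hM⟩ := h
  refine ⟨Subtype.val '' T, Subtype.val '' M, ?_, ?_, ⟨(G.connOn_restrict S T).1 hTconn, ?_⟩, ?_⟩
  · rw [← Set.image_union, hunion, Set.image_univ, Subtype.range_coe]
  · exact (Set.disjoint_image_iff Subtype.val_injective).2 hdisj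
  · rintro ⟨C, hC, hCT⟩
    obtain ⟨C', rfl⟩ := exists_map_eq_of_forall_mem (S := S) C fun p hp => by
      obtain ⟨x, _, hx⟩ := hCT p hp
      exact hx ▸ x.2
    refine hTacyc ⟨C', (G.isCycle_restrict_iff C').2 hC, fun p hp => ?_⟩
    obtain ⟨x, hx, hxp⟩ := hCT (p.1, p.2.1) (List.mem_map_of_mem hp)
    exact Subtype.ext hxp ▸ hx
  · rintro _ ⟨x, hx, rfl⟩ _ ⟨y, hy, rfl⟩ hxy
    exact hM x hx y hy fun h => hxy (h ▸ rfl)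

variable {G}

lemma ConnOn.of_ends {S S' : Set E} (hS : G.ConnOn S)
    (h : ∀ e ∈ S, ∀ a b, G.ends e = s(a, b) → Relation.ReflTransGen (G.AdjOn S') a b) :
    G.ConnOn S' :=
  ⟨hS.1, fun u v => Relation.reflTransGen_closed (fun _ _ ⟨e, he, hends⟩ => h e he _ _ hends)
    u v (hS.2 u v)⟩

lemma ConnOn.mono {S S' : Set E} (hS : G.ConnOn S) (h : S ⊆ S') : G.ConnOn S' :=
  ⟨hS.1, fun u v => G.reflTransGen_adjOn_mono h u v (hS.2 u v)⟩

namespace IsCycle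

variable {C : List (V × E)}

lemma length_pos (hC : G.IsCycle C) : 0 < C.length := by
  have := hC.2.2.1
  omega

lemma ends_getElem (hC : G.IsCycle C) (i : ℕ) (hi : i < C.length) :
    G.ends C[i].2 = s(C[i].1, (C[(i + 1) % C.length]'(Nat.mod_lt _ hC.length_pos)).1) :=
  hC.2.2.2 ⟨i, hi⟩

lemma ends_getElem_mod (hC : G.IsCycle C) (k : ℕ) :
    G.ends (C[k % C.length]'(Nat.mod_lt _ hC.length_pos)).2 =
      s((C[k % C.length]'(Nat.mod_lt _ hC.length_pos)).1,
        (C[(k + 1) % C.length]'(Nat.mod_lt _ hC.length_pos)).1) := by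
  have h := hC.ends_getElem (k % C.length) (Nat.mod_lt _ hC.length_pos)
  simp only [Nat.mod_add_mod] at h
  exact h

lemma getElem_snd_inj (hC : G.IsCycle C) {i j : ℕ} (hi : i < C.length) (hj : j < C.length)
    (h : C[i].2 = C[j].2) : i = j :=
  (hC.2.1.getElem_inj_iff (i := i) (j := j) (hi := by simpa) (hj := by simpa)).1
    (by simpa using h)

lemma reflTransGen_succ_getElem (hC : G.IsCycle C) (i : ℕ) (hi : i < C.length) :
    Relation.ReflTransGen (G.AdjOn {x | x ∈ C.map Prod.snd ∧ x ≠ C[i].2})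
      (C[(i + 1) % C.length]'(Nat.mod_lt _ hC.length_pos)).1 C[i].1 := by
  have hn := hC.length_pos
  have walk : ∀ k ≤ C.length - 1, Relation.ReflTransGen
      (G.AdjOn {x | x ∈ C.map Prod.snd ∧ x ≠ C[i].2})
      (C[(i + 1) % C.length]'(Nat.mod_lt _ hn)).1
      (C[(i + 1 + k) % C.length]'(Nat.mod_lt _ hn)).1 := by
    intro k
    induction k with
    | zero => exact fun _ => .refl
    | succ k ih =>
      intro hk
      refine (ih (by omega)).tail ⟨_, ⟨List.mem_map_of_mem (List.getElem_mem _), fun h => ?_⟩,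
        hC.ends_getElem_mod (i + 1 + k)⟩
      have := hC.getElem_snd_inj _ hi h
      exact add_mod_ne_self hi (k := 1 + k) (by omega) (by omega) (by rwa [← Nat.add_assoc])
  have hwrap : (i + 1 + (C.length - 1)) % C.length = i := by
    rw [show i + 1 + (C.length - 1) = i + C.length by omega, Nat.add_mod_right,
      Nat.mod_eq_of_lt hi]
  simpa only [hwrap] using walk (C.length - 1) le_rfl

lemma reflTransGen_of_mem (hC : G.IsCycle C) {x : E} (hx : x ∈ C.map Prod.snd) {a b : V}
    (hab : G.ends x = s(a, b)) :
    Relation.ReflTransGen (G.AdjOn {y | y ∈ C.map Prod.snd ∧ y ≠ x}) a b := by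
  obtain ⟨p, hp, rfl⟩ := List.mem_map.1 hx
  obtain ⟨i, hi, rfl⟩ := List.getElem_of_mem hp
  have hpath := hC.reflTransGen_succ_getElem i hi
  rw [hC.ends_getElem i hi, Sym2.eq_iff] at hab
  rcases hab with ⟨rfl, rfl⟩ | ⟨rfl, rfl⟩
  · exact Std.Symm.symm _ _ hpath
  · exact hpath

lemma mem_fst_of_mem_ends (hC : G.IsCycle C) {x : E} (hx : x ∈ C.map Prod.snd) {w : V}
    (hw : w ∈ G.ends x) : w ∈ C.map Prod.fst := by
  obtain ⟨p, hp, rfl⟩ := List.mem_map.1 hx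
  obtain ⟨i, hi, rfl⟩ := List.getElem_of_mem hp
  rw [hC.ends_getElem i hi, Sym2.mem_iff] at hw
  rcases hw with rfl | rfl <;> exact List.mem_map_of_mem (List.getElem_mem _)

lemma exists_ne_of_mem_fst (hC : G.IsCycle C) {w : V} (hw : w ∈ C.map Prod.fst) :
    ∃ d₁ ∈ C.map Prod.snd, ∃ d₂ ∈ C.map Prod.snd, d₁ ≠ d₂ ∧ w ∈ G.ends d₁ ∧ w ∈ G.ends d₂ := by
  obtain ⟨p, hp, rfl⟩ := List.mem_map.1 hw
  obtain ⟨j, hj, rfl⟩ := List.getElem_of_mem hp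
  have hn := hC.length_pos
  have hlen := hC.2.2.1
  have hprev : (j + (C.length - 1) + 1) % C.length = j := by
    rw [show j + (C.length - 1) + 1 = j + C.length by omega, Nat.add_mod_right,
      Nat.mod_eq_of_lt hj]
  have hends := hC.ends_getElem_mod (j + (C.length - 1))
  simp only [hprev] at hends
  refine ⟨C[j].2, List.mem_map_of_mem (List.getElem_mem _),
    (C[(j + (C.length - 1)) % C.length]'(Nat.mod_lt _ hn)).2,
    List.mem_map_of_mem (List.getElem_mem _), fun h => ?_, ?_, ?_⟩
  · exact add_mod_ne_self hj (by omega) (by omega) (hC.getElem_snd_inj _ _ h).symm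
  · rw [hC.ends_getElem j hj]
    exact Sym2.mem_mk_left _ _
  · rw [hends]
    exact Sym2.mem_mk_right _ _

lemma mem_of_parallel [Finite E] (hC : G.IsCycle C) {w : V} (hw : G.deg w ≤ 3) {e f : E}
    (hef : e ≠ f) (he : w ∈ G.ends e) (hf : w ∈ G.ends f) (hfC : f ∉ C.map Prod.snd)
    (hwC : w ∈ C.map Prod.fst) : e ∈ C.map Prod.snd := by
  classical
  by_contra heC
  obtain ⟨d₁, hd₁, d₂, hd₂, hd, hw₁, hw₂⟩ := hC.exists_ne_of_mem_fst hwC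
  have hcard : ({d₁, d₂, e, f} : Finset E).card = 4 := by
    have : d₁ ≠ e ∧ d₁ ≠ f ∧ d₂ ≠ e ∧ d₂ ≠ f := by
      refine ⟨?_, ?_, ?_, ?_⟩ <;> rintro rfl <;> contradiction
    rw [Finset.card_insert_of_notMem (by simp [hd, this.1, this.2.1]),
      Finset.card_insert_of_notMem (by simp [this.2.2.1, this.2.2.2]), Finset.card_pair hef]
  have := G.card_le_deg {d₁, d₂, e, f} w (by simp [hw₁, hw₂, he, hf])
  omega

end IsCycle

-- Otherwise the rest of `C` would join the ends of `e` and `f` after both are deleted, so the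
-- 2-cycle `e f` would not be separating.
lemma Separating.not_mem_cycle_of_parallel (hsep : G.Separating) (hconn : G.Connected) {e f : E}
    (hef : e ≠ f) (hends : G.ends e = G.ends f) {C : List (V × E)} (hC : G.IsCycle C)
    (hfC : f ∉ C.map Prod.snd) : e ∉ C.map Prod.snd := by
  intro heC
  induction hu : G.ends e using Sym2.ind with | h u v => ?_
  apply hsep _ (G.isCycle_pair hef hu (hends ▸ hu))
  refine hconn.of_ends fun x _ a b hab => ?_
  by_cases hx : x = e ∨ x = f
  · have hab' : G.ends e = s(a, b) := by
      rcases hx with rfl | rfl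
      exacts [hab, hends ▸ hab]
    refine G.reflTransGen_adjOn_mono ?_ a b (hC.reflTransGen_of_mem heC hab')
    rintro y ⟨hyC, hye⟩
    simp only [List.map_cons, List.map_nil, List.mem_cons, List.not_mem_nil, or_false,
      Set.mem_ofPred_eq, not_or]
    exact ⟨hye, fun hyf => hfC (hyf ▸ hyC)⟩
  · exact .single ⟨x, by simpa using hx, hab⟩

lemma S13.restrict_compl_of_parallel [Finite E] (hG : G.S13) {e f : E} (hef : e ≠ f)
    (hends : G.ends e = G.ends f) : (G.restrict {f}ᶜ).S13 := by
  obtain ⟨hconn, hdeg, hsep⟩ := hG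
  refine ⟨?_, fun w => ⟨?_, (G.deg_restrict_le _ w).trans (hdeg w).2⟩, ?_⟩
  · rw [Connected, connOn_restrict, Set.image_univ, Subtype.range_coe]
    refine hconn.of_ends fun x _ a b hab => .single ?_
    by_cases hx : x = f
    · exact ⟨e, hef, hends ▸ hx ▸ hab⟩
    · exact ⟨x, hx, hab⟩
  · obtain ⟨x, hxf, hx⟩ : ∃ x, x ≠ f ∧ w ∈ G.ends x := by
      by_cases hw : w ∈ G.ends f
      · exact ⟨e, hef, hends ▸ hw⟩
      · obtain ⟨⟨x, hx⟩⟩ := (Nat.card_pos_iff.1 (hdeg w).1).1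
        exact ⟨x, fun h => hw (h ▸ hx), hx⟩
    have : Nonempty {x : ({f}ᶜ : Set E) // w ∈ (G.restrict {f}ᶜ).ends x} := ⟨⟨⟨x, hxf⟩, hx⟩⟩
    exact Nat.card_pos
  · intro C hC hconnC
    rw [isCycle_restrict_iff] at hC
    rw [connOn_restrict] at hconnC
    refine hsep _ hC (hconnC.mono ?_)
    rintro _ ⟨x, hx, rfl⟩ hmem
    rw [List.map_map] at hmem
    obtain ⟨p, hp, hpx⟩ := List.mem_map.1 hmem
    exact hx (List.mem_map.2 ⟨p, hp, Subtype.ext hpx⟩)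

lemma hasTM_of_hasTM_restrict_compl [Finite E] (hconn : G.Connected) (hsep : G.Separating)
    (hdeg : ∀ w, G.deg w ≤ 3) {e f : E} (hef : e ≠ f) (hends : G.ends e = G.ends f)
    (h : (G.restrict {f}ᶜ).HasTM) : G.HasTM := by
  obtain ⟨T, M, hunion, hdisj, hT, hM⟩ := G.exists_decomposition_of_hasTM_restrict h
  have hfTM : f ∉ T ∪ M := by simp [hunion]
  let meetsF : E → Prop := fun x => ∃ w, w ∈ G.ends x ∧ w ∈ G.ends f
  refine ⟨T ∪ {x ∈ M | meetsF x}, insert f {x ∈ M | ¬ meetsF x}, ?_, ?_,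
    ⟨hT.1.mono Set.subset_union_left, ?_⟩, ?_⟩
  · refine Set.eq_univ_of_forall fun x => ?_
    by_cases hxf : x = f
    · exact .inr (.inl hxf)
    have hx : x ∈ T ∪ M := by rwa [hunion]
    rcases hx with hxT | hxM
    · exact .inl (.inl hxT)
    by_cases hxF : meetsF x
    · exact .inl (.inr ⟨hxM, hxF⟩)
    · exact .inr (.inr ⟨hxM, hxF⟩)
  · rw [Set.disjoint_insert_right, Set.disjoint_union_left]
    refine ⟨fun hf => hfTM (hf.elim .inl (.inr ·.1)), ?_, ?_⟩
    · exact hdisj.mono_right fun x hx => hx.1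
    · exact Set.disjoint_left.2 fun x hx hx' => hx'.2 hx.2
  · rintro ⟨C, hC, hCT⟩
    have hfC : f ∉ C.map Prod.snd := by
      intro hf
      obtain ⟨p, hp, rfl⟩ := List.mem_map.1 hf
      rcases hCT p hp with h | h
      exacts [hfTM (.inl h), hfTM (.inr h.1)]
    refine hT.2 ⟨C, hC, fun p hp => ?_⟩
    rcases hCT p hp with h | ⟨-, w, hw, hwf⟩
    · exact h
    · have hwC := hC.mem_fst_of_mem_ends (List.mem_map_of_mem hp) hw
      exact (hsep.not_mem_cycle_of_parallel hconn hef hends hC hfC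
        (hC.mem_of_parallel (hdeg w) hef (hends ▸ hwf) hwf hfC hwC)).elim
  · rintro x hx y hy hxy w ⟨hwx, hwy⟩
    rcases hx with rfl | ⟨hxM, hxf⟩ <;> rcases hy with rfl | ⟨hyM, hyf⟩
    · exact hxy rfl
    · exact hyf ⟨w, hwy, hwx⟩
    · exact hxf ⟨w, hwx, hwy⟩
    · exact hM x hxM y hyM hxy w ⟨hwx, hwy⟩

end Multigraph

open Multigraph in
/-- A minimum counterexample in `S_{1,3}` to the 2-Decomposition
Conjecture contains no parallel edges, i.e. it is a simple graph. -/
theorem stmt_9 {V E : Type} [Finite V] [Finite E] (G : Multigraph V E)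
    (hG : G.MinCex) :
    ∀ e f : E, e ≠ f → G.ends e ≠ G.ends f := by
  intro e f hef hends
  obtain ⟨hS, hnoTM, hmin⟩ := hG
  have hlt : (G.restrict {f}ᶜ).phi < G.phi :=
    G.phi_restrict_lt (Set.compl_ne_univ.2 (Set.singleton_nonempty f))
  refine hnoTM (hasTM_of_hasTM_restrict_compl hS.1 hS.2.2 (fun w => (hS.2.1 w).2) hef hends ?_)
  by_contra hHnoTM
  exact hlt.not_ge (hmin _ _ inferInstance inferInstance _ (hS.restrict_compl_of_parallel hef hends)
    hHnoTM)
end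

section
/- In a minimum counterexample G ∈ S_{1,3} to the 2-Decomposition Conjecture, no two vertices of degree 2 are adjacent. -/
/-!
Let the edge `e` join two vertices `u`, `v` of degree 2. If `e` has a parallel edge `f`, then
`G` is just the digon `{e, f}`, which is the tree `{e}` plus the matching `{f}`. Otherwise contract
`e`, merging `v` into `u`. The merged vertex again has degree 2, so every cycle through it is
separating, and every other cycle lifts to a cycle of `G`; hence the contraction lies in `S_{1,3}`
and, being smaller, splits into a spanning tree `T` and a matching `M`. Then `T + e` and `M`
split `G`: a cycle in `T + e` would contract to a cycle in `T`.
-/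

namespace Multigraph

variable {V E : Type} {G : Multigraph V E}

lemma ne_of_ends_eq {e : E} {u v : V} (he : G.ends e = s(u, v)) : u ≠ v := by
  have := G.loopless e
  rwa [he, Sym2.mk_isDiag_iff] at this

lemma exists_ne_ends_eq {x : V} {f : E} (hx : x ∈ G.ends f) : ∃ y ≠ x, G.ends f = s(x, y) :=
  ⟨_, Sym2.other_ne (G.loopless f) hx, (Sym2.other_spec hx).symm⟩

variable (G) in
lemma exists_ends_eq (f : E) : ∃ x y, x ≠ y ∧ G.ends f = s(x, y) := by
  obtain ⟨y, hy, h⟩ := exists_ne_ends_eq (G.ends f).out_fst_mem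
  exact ⟨_, y, hy.symm, h⟩

lemma AdjOn.symm {S : Set E} {x y : V} (h : G.AdjOn S x y) : G.AdjOn S y x := by
  obtain ⟨f, hf, hxy⟩ := h
  exact ⟨f, hf, hxy.trans Sym2.eq_swap⟩

lemma reflTransGen_adjOn_symm {S : Set E} {x y : V}
    (h : Relation.ReflTransGen (G.AdjOn S) x y) : Relation.ReflTransGen (G.AdjOn S) y x :=
  Relation.ReflTransGen.mono (fun _ _ hab => AdjOn.symm hab) _ _ (Relation.ReflTransGen.swap _ _ h)

lemma eq_of_reflTransGen_adjOn {S : Set E} {x y : V} (hx : ∀ f ∈ S, x ∉ G.ends f)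
    (h : Relation.ReflTransGen (G.AdjOn S) x y) : x = y := by
  rcases h.cases_head with h | ⟨_, ⟨f, hf, hxf⟩, -⟩
  · exact h
  · exact absurd (hxf ▸ Sym2.mem_mk_left _ _) (hx f hf)

lemma Connected.forall_of_adj_closed {P : V → Prop} (hG : G.Connected) {x : V} (hx : P x)
    (hP : ∀ a b, P a → G.Adj a b → P b) (y : V) : P y := by
  induction hG.2 x y with
  | refl => exact hx
  | tail _ hab ih => exact hP _ _ ih hab

lemma exists_ne_of_deg_eq_two {x : V} {f : E} (hx : G.deg x = 2) (hf : x ∈ G.ends f) :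
    ∃ g ≠ f, x ∈ G.ends g ∧ ∀ k, x ∈ G.ends k → k = f ∨ k = g := by
  obtain ⟨a, b, hab, hs⟩ : ∃ a b, a ≠ b ∧ {k | x ∈ G.ends k} = {a, b} :=
    Set.ncard_eq_two.mp ((Nat.card_coe_set_eq _).symm.trans hx)
  have hmem : ∀ k, x ∈ G.ends k ↔ k = a ∨ k = b := fun k => by
    simpa using congrArg (k ∈ ·) hs
  rcases (hmem f).mp hf with rfl | rfl
  · exact ⟨b, hab.symm, (hmem b).mpr (Or.inr rfl), fun k hk => (hmem k).mp hk⟩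
  · exact ⟨a, hab, (hmem a).mpr (Or.inl rfl), fun k hk => ((hmem k).mp hk).symm⟩

lemma isCycle_iff_getElem {l : List (V × E)} :
    G.IsCycle l ↔ (l.map Prod.fst).Nodup ∧ (l.map Prod.snd).Nodup ∧ 2 ≤ l.length ∧
      ∀ (n : ℕ) (hn : n < l.length) (hm : (n + 1) % l.length < l.length),
        G.ends l[n].2 = s(l[n].1, l[(n + 1) % l.length].1) := by
  refine and_congr_right fun _ => and_congr_right fun _ => and_congr_right fun _ => ?_
  exact ⟨fun h n hn _ => by simpa using h ⟨n, hn⟩,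
    fun h i => by simpa using h i i.isLt (Nat.mod_lt _ i.pos)⟩

lemma isCycle_iff_getElem_succ {l : List (V × E)} :
    G.IsCycle l ↔ (l.map Prod.fst).Nodup ∧ (l.map Prod.snd).Nodup ∧ 2 ≤ l.length ∧
      (∀ (n : ℕ) (hn : n + 1 < l.length), G.ends l[n].2 = s(l[n].1, l[n + 1].1)) ∧
      ∀ hc : 0 < l.length, G.ends l[l.length - 1].2 = s(l[l.length - 1].1, l[0].1) := by
  rw [isCycle_iff_getElem]
  refine and_congr_right fun _ => and_congr_right fun _ => and_congr_right fun _ => ?_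
  constructor
  · intro h
    refine ⟨fun n hn => ?_, fun hc => ?_⟩
    · simpa [Nat.mod_eq_of_lt hn] using h n (by omega) (Nat.mod_lt _ (by omega))
    · simpa [Nat.sub_add_cancel hc] using h (l.length - 1) (by omega) (Nat.mod_lt _ hc)
  · rintro ⟨hsucc, hlast⟩ n hn -
    rcases Nat.lt_or_ge (n + 1) l.length with h | h
    · simpa [Nat.mod_eq_of_lt h] using hsucc n h
    · obtain rfl : n = l.length - 1 := by omega
      simpa [Nat.sub_add_cancel (by omega : 0 < l.length)] using hlast (by omega)

lemma IsCycle.rotate {l : List (V × E)} (h : G.IsCycle l) (k : ℕ) : G.IsCycle (l.rotate k) := by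
  obtain ⟨h1, h2, h3, h4⟩ := h
  have hlen : (l.rotate k).length = l.length := l.length_rotate k
  refine ⟨?_, ?_, by omega, fun i => ?_⟩
  · rw [List.map_rotate]; exact List.nodup_rotate.mpr h1
  · rw [List.map_rotate]; exact List.nodup_rotate.mpr h2
  · rw [List.get_rotate, List.get_rotate]
    have hidx : ((↑i + 1) % (l.rotate k).length + k) % l.length
        = ((↑i + k) % l.length + 1) % l.length := by
      generalize (↑i : ℕ) = m
      rw [hlen, Nat.mod_add_mod, Nat.mod_add_mod, Nat.add_right_comm]
    simp only [hidx]
    exact h4 ⟨(↑i + k) % l.length, Nat.mod_lt _ (by omega)⟩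

lemma IsCycle.exists_cons_of_mem {l : List (V × E)} {p : V × E} (h : G.IsCycle l) (hp : p ∈ l) :
    ∃ t, G.IsCycle (p :: t) ∧ ∀ q, q ∈ p :: t ↔ q ∈ l := by
  obtain ⟨s, t, rfl⟩ := List.append_of_mem hp
  refine ⟨t ++ s, ?_, fun q => ?_⟩
  · simpa [List.rotate_append_length_eq] using h.rotate s.length
  · simp only [List.mem_cons, List.mem_append]
    tauto

lemma IsCycle.fst_mem_ends_and_exists_ne {l : List (V × E)} {p : V × E} (h : G.IsCycle l)
    (hp : p ∈ l) :
    p.1 ∈ G.ends p.2 ∧ ∃ q ∈ l, q.2 ≠ p.2 ∧ p.1 ∈ G.ends q.2 := by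
  obtain ⟨t, ht, hmem⟩ := h.exists_cons_of_mem hp
  obtain ⟨-, hnd, hlen, hsucc, hlast⟩ := isCycle_iff_getElem_succ.mp ht
  have hfirst := hsucc 0 (by omega)
  have hlast := hlast (by omega)
  simp only [List.getElem_cons_zero] at hfirst hlast
  have hq : (p :: t)[(p :: t).length - 1] ∈ t := by
    simp only [List.length_cons, Nat.add_sub_cancel]
    cases t with
    | nil => simp at hlen
    | cons _ _ => exact List.getElem_mem _
  have hne : p.2 ∉ t.map Prod.snd := (List.nodup_cons.mp (by simpa using hnd)).1
  refine ⟨hfirst ▸ Sym2.mem_mk_left _ _, _, (hmem _).mp (List.mem_cons_of_mem _ hq),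
    fun heq => hne (heq ▸ List.mem_map_of_mem hq), hlast ▸ Sym2.mem_mk_right _ _⟩

lemma IsCycle.snd_mem_of_deg_eq_two {l : List (V × E)} {p : V × E} {f : E} (h : G.IsCycle l)
    (hp : p ∈ l) (hdeg : G.deg p.1 = 2) (hf : p.1 ∈ G.ends f) : f ∈ l.map Prod.snd := by
  obtain ⟨hp2, q, hq, hqp, hq2⟩ := h.fst_mem_ends_and_exists_ne hp
  obtain ⟨g, -, -, hall⟩ := exists_ne_of_deg_eq_two hdeg hp2
  have hqg : q.2 = g := (hall q.2 hq2).resolve_left hqp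
  rcases hall f hf with rfl | rfl
  · exact List.mem_map_of_mem hp
  · exact hqg ▸ List.mem_map_of_mem hq

lemma IsCycle.not_connOn_of_deg_eq_two {l : List (V × E)} {p : V × E} (h : G.IsCycle l)
    (hp : p ∈ l) (hdeg : G.deg p.1 = 2) : ¬ G.ConnOn {f | f ∉ l.map Prod.snd} := by
  rintro ⟨-, hconn⟩
  obtain ⟨y, hy, -⟩ := exists_ne_ends_eq (h.fst_mem_ends_and_exists_ne hp).1
  exact hy (eq_of_reflTransGen_adjOn
    (fun _ hf hpf => absurd (h.snd_mem_of_deg_eq_two hp hdeg hpf) hf) (hconn p.1 y)).symm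

lemma isCycle_map_iff {V' E' : Type} {G' : Multigraph V' E'} {f : V' → V} {g : E' → E}
    (hf : f.Injective) (hg : g.Injective) {l : List (V' × E')}
    (hends : ∀ p ∈ l, ∀ q ∈ l, G'.ends p.2 = s(p.1, q.1) ↔ G.ends (g p.2) = s(f p.1, f q.1)) :
    G'.IsCycle l ↔ G.IsCycle (l.map (Prod.map f g)) := by
  rw [isCycle_iff_getElem, isCycle_iff_getElem, List.map_map, List.map_map, Prod.map_fst',
    Prod.map_snd', ← List.map_map, ← List.map_map, List.nodup_map_iff hf, List.nodup_map_iff hg]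
  simp only [List.length_map, List.getElem_map, Prod.map_fst, Prod.map_snd]
  refine and_congr_right fun _ => and_congr_right fun _ => and_congr_right fun _ =>
    forall_congr' fun n => forall_congr' fun hn => forall_congr' fun hm => ?_
  exact hends _ (List.getElem_mem _) _ (List.getElem_mem _)

lemma hasTM_of_parallel {u v : V} {e f : E} (hG : G.Connected) (he : G.ends e = s(u, v))
    (hf : G.ends f = s(u, v)) (hfe : f ≠ e) (hu : G.deg u = 2) (hv : G.deg v = 2) :
    G.HasTM := by
  have hedge : ∀ g, u ∈ G.ends g ∨ v ∈ G.ends g → g = e ∨ g = f := by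
    obtain ⟨g, -, -, hall⟩ := exists_ne_of_deg_eq_two hu (he ▸ Sym2.mem_mk_left u v)
    obtain ⟨g', -, -, hall'⟩ := exists_ne_of_deg_eq_two hv (he ▸ Sym2.mem_mk_right u v)
    have hfg : f = g := (hall f (hf ▸ Sym2.mem_mk_left u v)).resolve_left hfe
    have hfg' : f = g' := (hall' f (hf ▸ Sym2.mem_mk_right u v)).resolve_left hfe
    rintro g (hg | hg)
    · exact hfg ▸ hall g hg
    · exact hfg' ▸ hall' g hg
  have hends : ∀ g, u ∈ G.ends g ∨ v ∈ G.ends g → G.ends g = s(u, v) := fun g hg => by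
    rcases hedge g hg with rfl | rfl
    exacts [he, hf]
  have hvert : ∀ x, x = u ∨ x = v := by
    refine hG.forall_of_adj_closed (Or.inl rfl) fun a b ha ⟨g, _, hg⟩ => ?_
    have hb : b ∈ G.ends g := hg ▸ Sym2.mem_mk_right a b
    rw [hends g (by rcases ha with rfl | rfl <;> simp [hg])] at hb
    exact Sym2.mem_iff.mp hb
  have hall : ∀ g, g = e ∨ g = f := fun g => by
    obtain ⟨x, y, -, hxy⟩ := G.exists_ends_eq g
    exact hedge g (by rcases hvert x with rfl | rfl <;> simp [hxy])
  refine ⟨{e}, {e}ᶜ, Set.union_compl_self _, disjoint_compl_right, ⟨⟨⟨u⟩, fun x y => ?_⟩, ?_⟩, ?_⟩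
  · have huv : G.AdjOn {e} u v := ⟨e, rfl, he⟩
    rcases hvert x with rfl | rfl <;> rcases hvert y with rfl | rfl
    exacts [.refl, .single huv, .single huv.symm, .refl]
  · rintro ⟨l, hl, hle⟩
    have hlen := hl.2.2.1
    obtain ⟨-, q, hq, hqp, -⟩ :=
      hl.fst_mem_ends_and_exists_ne (List.getElem_mem (show 0 < l.length by omega))
    exact hqp ((hle q hq).trans (hle _ (List.getElem_mem _)).symm)
  · intro g hg k hk hgk _ _
    exact hgk (((hall g).resolve_left hg).trans ((hall k).resolve_left hk).symm)

section Contract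

variable {u v : V} (huv : u ≠ v)

open Classical in
noncomputable def merge (x : V) : {x : V // x ≠ v} :=
  if h : x = v then ⟨u, huv⟩ else ⟨x, h⟩

lemma merge_of_ne {x : V} (hx : x ≠ v) : merge huv x = ⟨x, hx⟩ := dif_neg hx

lemma merge_right : merge huv v = ⟨u, huv⟩ := dif_pos rfl

lemma merge_left : merge huv u = ⟨u, huv⟩ := merge_of_ne huv huv

@[simp]
lemma merge_val (a : {x : V // x ≠ v}) : merge huv a.val = a := merge_of_ne huv a.2

lemma merge_eq_left_iff {x : V} : merge huv x = ⟨u, huv⟩ ↔ x = u ∨ x = v := by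
  by_cases hx : x = v
  · simp [hx, merge_right]
  · simp [merge_of_ne huv hx, hx]

lemma eq_val_of_merge_eq {x : V} {a : {x : V // x ≠ v}} (h : merge huv x = a)
    (ha : a ≠ ⟨u, huv⟩) : x = a.val := by
  by_cases hx : x = v
  · subst hx
    exact absurd (h.symm.trans (merge_right huv)) ha
  · rw [merge_of_ne huv hx] at h
    exact congrArg Subtype.val h

lemma eq_or_of_merge_eq_merge {x y : V} (h : merge huv x = merge huv y) :
    x = y ∨ (x = u ∨ x = v) ∧ (y = u ∨ y = v) := by
  by_cases hx : merge huv x = ⟨u, huv⟩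
  · exact .inr ⟨(merge_eq_left_iff huv).mp hx, (merge_eq_left_iff huv).mp (h ▸ hx)⟩
  · exact .inl ((eq_val_of_merge_eq huv rfl hx).trans (eq_val_of_merge_eq huv h.symm hx).symm)

lemma merge_injOn {z : V} (hz : z = u ∨ z = v) : Set.InjOn (merge huv) {x | x ≠ z} := by
  intro x (hx : x ≠ z) y (hy : y ≠ z) hxy
  rcases eq_or_of_merge_eq_merge huv hxy with h | ⟨hx', hy'⟩
  · exact h
  · rcases hz with rfl | rfl <;> rcases hx' with rfl | rfl <;> rcases hy' with rfl | rfl <;>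
      trivial

variable {e : E}

lemma reflTransGen_merge_val (he : G.ends e = s(u, v)) {S : Set E} (heS : e ∈ S) (x : V) :
    Relation.ReflTransGen (G.AdjOn S) (merge huv x).val x := by
  by_cases hx : x = v
  · subst hx
    rw [merge_right]
    exact .single ⟨e, heS, he⟩
  · rw [merge_of_ne huv hx]

variable (G) in
noncomputable def contract (he : G.ends e = s(u, v)) (hpar : ∀ f, G.ends f = s(u, v) → f = e) :
    Multigraph {x : V // x ≠ v} {f : E // f ≠ e} where
  ends f := (G.ends f.val).map (merge huv)
  loopless := by
    rintro ⟨f, hf⟩ hd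
    obtain ⟨x, y, hne, hxy⟩ := G.exists_ends_eq f
    rw [hxy, Sym2.map_mk, Sym2.mk_isDiag_iff] at hd
    rcases eq_or_of_merge_eq_merge huv hd with h | ⟨hx, hy⟩
    · exact hne h
    · refine hf (hpar f ?_)
      rw [hxy]
      rcases hx with rfl | rfl <;> rcases hy with rfl | rfl
      exacts [absurd rfl hne, rfl, Sym2.eq_swap, absurd rfl hne]

variable (he : G.ends e = s(u, v)) (hpar : ∀ f, G.ends f = s(u, v) → f = e)

@[simp]
lemma contract_ends (f : {f : E // f ≠ e}) :
    (G.contract huv he hpar).ends f = (G.ends f.val).map (merge huv) := rfl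

lemma mem_contract_ends_left_iff (f : {f : E // f ≠ e}) :
    ⟨u, huv⟩ ∈ (G.contract huv he hpar).ends f ↔ u ∈ G.ends f ∨ v ∈ G.ends f := by
  simp only [contract_ends, Sym2.mem_map, merge_eq_left_iff]
  constructor
  · rintro ⟨x, hx, rfl | rfl⟩ <;> simp [hx]
  · rintro (h | h) <;> exact ⟨_, h, by simp⟩

lemma mem_contract_ends_iff {a : {x : V // x ≠ v}} (ha : a ≠ ⟨u, huv⟩) (f : {f : E // f ≠ e}) :
    a ∈ (G.contract huv he hpar).ends f ↔ a.val ∈ G.ends f := by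
  simp only [contract_ends, Sym2.mem_map]
  constructor
  · rintro ⟨x, hx, hxa⟩
    rwa [eq_val_of_merge_eq huv hxa ha] at hx
  · exact fun h => ⟨a.val, h, merge_val huv a⟩

lemma contract_ends_eq_iff {a b : {x : V // x ≠ v}} (ha : a ≠ ⟨u, huv⟩) (hb : b ≠ ⟨u, huv⟩)
    (f : {f : E // f ≠ e}) :
    (G.contract huv he hpar).ends f = s(a, b) ↔ G.ends f = s(a.val, b.val) := by
  obtain ⟨x, y, -, hxy⟩ := G.exists_ends_eq f.val
  rw [contract_ends, hxy]
  constructor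
  · intro h
    rw [Sym2.map_mk] at h
    rcases Sym2.eq_iff.mp h with ⟨hx, hy⟩ | ⟨hx, hy⟩
    · rw [eq_val_of_merge_eq huv hx ha, eq_val_of_merge_eq huv hy hb]
    · rw [eq_val_of_merge_eq huv hx hb, eq_val_of_merge_eq huv hy ha, Sym2.eq_swap]
  · intro h
    rw [h, Sym2.map_mk, merge_val, merge_val]

lemma deg_contract_of_ne {a : {x : V // x ≠ v}} (ha : a ≠ ⟨u, huv⟩) :
    (G.contract huv he hpar).deg a = G.deg a.val :=
  Nat.card_congr
    { toFun := fun f => ⟨f.1.1, (mem_contract_ends_iff huv he hpar ha f.1).mp f.2⟩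
      invFun := fun f => ⟨⟨f.1, fun hfe => by
          have := f.2
          rw [hfe, he, Sym2.mem_iff] at this
          exact this.elim (fun h => ha (Subtype.ext h)) a.2⟩,
        (mem_contract_ends_iff huv he hpar ha _).mpr f.2⟩
      left_inv := fun _ => rfl
      right_inv := fun _ => rfl }

lemma deg_contract_left (hu : G.deg u = 2) (hv : G.deg v = 2) :
    (G.contract huv he hpar).deg ⟨u, huv⟩ = 2 := by
  obtain ⟨eu, heu, heu_mem, heu_all⟩ := exists_ne_of_deg_eq_two hu (he ▸ Sym2.mem_mk_left u v)
  obtain ⟨ev, hev, hev_mem, hev_all⟩ := exists_ne_of_deg_eq_two hv (he ▸ Sym2.mem_mk_right u v)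
  have heuev : eu ≠ ev := fun h => heu (hpar eu (Sym2.eq_of_ne_mem huv heu_mem (h ▸ hev_mem)
    (Sym2.mem_mk_left u v) (Sym2.mem_mk_right u v)))
  have hset : {f | ⟨u, huv⟩ ∈ (G.contract huv he hpar).ends f} = {⟨eu, heu⟩, ⟨ev, hev⟩} := by
    ext f
    simp only [Set.mem_ofPred_eq, Set.mem_insert_iff, Set.mem_singleton_iff,
      mem_contract_ends_left_iff, Subtype.ext_iff]
    constructor
    · rintro (h | h)
      · exact .inl ((heu_all f h).resolve_left f.2)
      · exact .inr ((hev_all f h).resolve_left f.2)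
    · rintro (h | h) <;> rw [h]
      exacts [.inl heu_mem, .inr hev_mem]
  rw [deg, ← Set.ncard_pair (a := (⟨eu, heu⟩ : {f : E // f ≠ e})) (b := ⟨ev, hev⟩)
    (fun h => heuev (congrArg Subtype.val h)), ← hset, ← Nat.card_coe_set_eq]
  rfl

lemma Connected.contract (hG : G.Connected) : (G.contract huv he hpar).Connected := by
  refine ⟨⟨⟨u, huv⟩⟩, fun a b => ?_⟩
  rw [← merge_val huv a, ← merge_val huv b]
  refine Relation.ReflTransGen.lift' (merge huv) (fun x y ⟨f, _, hxy⟩ => ?_) _ _ (hG.2 a.val b.val)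
  by_cases hfe : f = e
  · subst hfe
    rw [he] at hxy
    rcases Sym2.eq_iff.mp hxy with ⟨rfl, rfl⟩ | ⟨rfl, rfl⟩ <;>
      simp only [Function.onFun, merge_left, merge_right] <;> rfl
  · exact .single ⟨⟨f, hfe⟩, trivial, by rw [contract_ends, hxy, Sym2.map_mk]⟩

lemma ConnOn.of_contract {S' : Set {f : E // f ≠ e}} {S : Set E}
    (h : (G.contract huv he hpar).ConnOn S') (heS : e ∈ S) (hS : ∀ f ∈ S', f.val ∈ S) :
    G.ConnOn S := by
  have hlift : ∀ a b, (G.contract huv he hpar).AdjOn S' a b →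
      Relation.ReflTransGen (G.AdjOn S) a.val b.val := by
    rintro a b ⟨f, hf, hab⟩
    have hstep : ∀ {x y}, G.ends f = s(x, y) →
        Relation.ReflTransGen (G.AdjOn S) (merge huv x).val (merge huv y).val := fun hxy =>
      ((reflTransGen_merge_val huv he heS _).tail ⟨f, hS f hf, hxy⟩).trans
        (reflTransGen_adjOn_symm (reflTransGen_merge_val huv he heS _))
    obtain ⟨x, y, -, hxy⟩ := G.exists_ends_eq f.val
    rw [contract_ends, hxy, Sym2.map_mk, Sym2.eq_iff] at hab
    rcases hab with ⟨rfl, rfl⟩ | ⟨rfl, rfl⟩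
    · exact hstep hxy
    · exact hstep (hxy.trans Sym2.eq_swap)
  refine ⟨⟨u⟩, fun x y => ?_⟩
  exact (reflTransGen_adjOn_symm (reflTransGen_merge_val huv he heS x)).trans
    ((Relation.ReflTransGen.lift' Subtype.val hlift _ _ (h.2 _ _)).trans
      (reflTransGen_merge_val huv he heS y))

lemma isCycle_contract_iff {l : List ({x : V // x ≠ v} × {f : E // f ≠ e})}
    (hl : ∀ p ∈ l, p.1 ≠ ⟨u, huv⟩) :
    (G.contract huv he hpar).IsCycle l ↔ G.IsCycle (l.map (Prod.map Subtype.val Subtype.val)) :=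
  isCycle_map_iff Subtype.val_injective Subtype.val_injective fun p hp q hq =>
    contract_ends_eq_iff huv he hpar (hl p hp) (hl q hq) p.2

lemma Separating.contract (hsep : G.Separating) (hu : G.deg u = 2) (hv : G.deg v = 2) :
    (G.contract huv he hpar).Separating := by
  intro l hl hconn
  by_cases hw : ∀ p ∈ l, p.1 ≠ ⟨u, huv⟩
  · refine hsep _ ((isCycle_contract_iff huv he hpar hw).mp hl)
      (hconn.of_contract huv he hpar (by simp) fun f hf hmem => hf ?_)
    rw [List.map_map, Prod.map_snd', ← List.map_map, List.mem_map] at hmem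
    obtain ⟨f', hf', hff'⟩ := hmem
    exact Subtype.ext hff' ▸ hf'
  · simp only [not_forall, not_not] at hw
    obtain ⟨p, hp, hpw⟩ := hw
    exact hl.not_connOn_of_deg_eq_two hp (hpw ▸ deg_contract_left huv he hpar hu hv) hconn

lemma isCycle_contract_of_cons {x : V} {t : List (V × E)} (ht : G.IsCycle ((x, e) :: t))
    (hte : ∀ p ∈ t, p.2 ≠ e) :
    (G.contract huv he hpar).IsCycle (t.pmap (fun p hp => (merge huv p.1, ⟨p.2, hp⟩)) hte) := by
  obtain ⟨hfst, hsnd, hlen, hsucc, hlast⟩ := isCycle_iff_getElem_succ.mp ht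
  simp only [List.map_cons, List.nodup_cons, List.length_cons] at hfst hsnd hlen hsucc hlast
  have ht0 : 0 < t.length := by omega
  have hxt : G.ends e = s(x, t[0].1) := by simpa using hsucc 0 (by omega)
  have hw : merge huv x = ⟨u, huv⟩ ∧ merge huv t[0].1 = ⟨u, huv⟩ := by
    simp only [merge_eq_left_iff]
    rcases Sym2.eq_iff.mp (hxt.symm.trans he) with ⟨rfl, rfl⟩ | ⟨rfl, rfl⟩ <;> simp
  have hx : x = u ∨ x = v := (merge_eq_left_iff huv).mp hw.1
  rw [isCycle_iff_getElem_succ]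
  refine ⟨?_, ?_, ?_, fun n hn => ?_, fun hn => ?_⟩
  · have hmap : (t.pmap (fun p hp => (merge huv p.1, (⟨p.2, hp⟩ : {f // f ≠ e}))) hte).map
        Prod.fst = (t.map Prod.fst).map (merge huv) := by
      simp [List.map_pmap, List.pmap_eq_map]
    rw [hmap]
    refine hfst.2.map_on fun a ha b hb hab => merge_injOn huv hx ?_ ?_ hab
    · exact fun hax => hfst.1 (hax ▸ ha)
    · exact fun hbx => hfst.1 (hbx ▸ hb)
  · refine List.Nodup.of_map Subtype.val ?_
    simpa [List.map_pmap, List.pmap_eq_map] using hsnd.2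
  · simp only [List.length_pmap]
    by_contra h1
    obtain ⟨⟨y, g⟩, rfl⟩ : ∃ p, t = [p] := List.length_eq_one_iff.mp (by omega)
    have hg := hlast (by simp)
    simp only [List.length_singleton, Nat.add_sub_cancel, List.getElem_cons_succ,
      List.getElem_cons_zero] at hg hxt
    exact hte _ (List.mem_singleton_self _)
      (hpar g (hg.trans (Sym2.eq_swap.trans (hxt.symm.trans he))))
  · have hn' : n + 1 < t.length := by simpa using hn
    have h := hsucc (n + 1) (by omega)
    simp only [List.getElem_cons_succ] at h
    simp only [List.getElem_pmap, contract_ends, h, Sym2.map_mk]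
  · have h := hlast (by omega)
    simp only [List.getElem_cons, Nat.add_sub_cancel, ht0.ne', dite_false, dite_true] at h
    simp only [List.getElem_pmap, contract_ends, List.length_pmap, h, Sym2.map_mk, hw]

lemma IsCycle.exists_contract_of_mem {l : List (V × E)} (hl : G.IsCycle l)
    (hel : e ∈ l.map Prod.snd) :
    ∃ l' : List ({x : V // x ≠ v} × {f : E // f ≠ e}),
      (G.contract huv he hpar).IsCycle l' ∧ ∀ p ∈ l', p.2.val ∈ l.map Prod.snd := by
  obtain ⟨⟨x, f⟩, hx, hfe : f = e⟩ := List.mem_map.mp hel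
  obtain ⟨t, ht, hmem⟩ := hl.exists_cons_of_mem hx
  rw [hfe] at ht hmem
  have hte : ∀ p ∈ t, p.2 ≠ e := fun p hp hpe =>
    (List.nodup_cons.mp ht.2.1).1 (List.mem_map.mpr ⟨p, hp, hpe⟩)
  refine ⟨_, isCycle_contract_of_cons huv he hpar ht hte, fun p hp => ?_⟩
  obtain ⟨q, hq, rfl⟩ := List.mem_pmap.mp hp
  exact List.mem_map_of_mem ((hmem q).mp (List.mem_cons_of_mem _ hq))

lemma IsCycle.exists_contract_of_not_mem {l : List (V × E)} (hl : G.IsCycle l)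
    (hel : e ∉ l.map Prod.snd) (hu : G.deg u = 2) (hv : G.deg v = 2) :
    ∃ l' : List ({x : V // x ≠ v} × {f : E // f ≠ e}),
      (G.contract huv he hpar).IsCycle l' ∧ ∀ p ∈ l', p.2.val ∈ l.map Prod.snd := by
  have hvert : ∀ p ∈ l, p.1 ≠ u ∧ p.1 ≠ v := fun p hp =>
    ⟨fun h => hel (hl.snd_mem_of_deg_eq_two hp (h ▸ hu) (by simp [h, he])),
      fun h => hel (hl.snd_mem_of_deg_eq_two hp (h ▸ hv) (by simp [h, he]))⟩
  have hlift : ∀ p ∈ l, p.1 ≠ v ∧ p.2 ≠ e := fun p hp =>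
    ⟨(hvert p hp).2, fun hpe => hel (hpe ▸ List.mem_map_of_mem hp)⟩
  set l' := l.pmap (fun p hp => ((⟨p.1, hp.1⟩ : {x // x ≠ v}), (⟨p.2, hp.2⟩ : {f // f ≠ e})))
    hlift
  have hl' : l'.map (Prod.map Subtype.val Subtype.val) = l := by
    simp [l', List.map_pmap]
  refine ⟨l', (isCycle_contract_iff huv he hpar fun p hp => ?_).mpr (hl' ▸ hl), fun p hp => ?_⟩
  · obtain ⟨q, hq, rfl⟩ := List.mem_pmap.mp hp
    exact fun h => (hvert q hq).1 (congrArg Subtype.val h)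
  · obtain ⟨q, hq, rfl⟩ := List.mem_pmap.mp hp
    exact List.mem_map_of_mem hq

lemma IsTreeSet.of_contract {T : Set {f : E // f ≠ e}}
    (hT : (G.contract huv he hpar).IsTreeSet T) (hu : G.deg u = 2) (hv : G.deg v = 2) :
    G.IsTreeSet (insert e (Subtype.val '' T)) := by
  refine ⟨hT.1.of_contract huv he hpar (Set.mem_insert _ _)
    fun f hf => Set.mem_insert_of_mem _ ⟨f, hf, rfl⟩, ?_⟩
  rintro ⟨l, hl, hlT⟩
  obtain ⟨l', hl', hl'l⟩ := by_cases (hl.exists_contract_of_mem huv he hpar)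
    fun hel => hl.exists_contract_of_not_mem huv he hpar hel hu hv
  refine hT.2 ⟨l', hl', fun p hp => ?_⟩
  obtain ⟨q, hq, hqp⟩ := List.mem_map.mp (hl'l p hp)
  rcases hqp ▸ hlT q hq with h | ⟨f, hf, hfp⟩
  exacts [absurd h p.2.2, Subtype.ext hfp ▸ hf]

lemma IsMatchingSet.of_contract {M : Set {f : E // f ≠ e}}
    (hM : (G.contract huv he hpar).IsMatchingSet M) : G.IsMatchingSet (Subtype.val '' M) := by
  rintro _ ⟨f, hf, rfl⟩ _ ⟨g, hg, rfl⟩ hfg x ⟨hxf, hxg⟩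
  exact hM f hf g hg (fun h => hfg (congrArg _ h)) (merge huv x)
    ⟨Sym2.mem_map.mpr ⟨x, hxf, rfl⟩, Sym2.mem_map.mpr ⟨x, hxg, rfl⟩⟩

lemma HasTM.of_contract (h : (G.contract huv he hpar).HasTM) (hu : G.deg u = 2)
    (hv : G.deg v = 2) : G.HasTM := by
  obtain ⟨T, M, hTM, hdisj, hT, hM⟩ := h
  refine ⟨insert e (Subtype.val '' T), Subtype.val '' M, Set.eq_univ_of_forall fun f => ?_, ?_,
    hT.of_contract huv he hpar hu hv, hM.of_contract huv he hpar⟩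
  · by_cases hf : f = e
    · exact .inl (.inl hf)
    · have : (⟨f, hf⟩ : {f : E // f ≠ e}) ∈ T ∪ M := hTM ▸ Set.mem_univ _
      rcases this with h | h
      exacts [.inl (.inr ⟨_, h, rfl⟩), .inr ⟨_, h, rfl⟩]
  · rw [Set.disjoint_left]
    rintro _ (rfl | ⟨f, hf, rfl⟩) ⟨g, hg, hgf⟩
    · exact g.2 hgf
    · exact Set.disjoint_left.mp hdisj hf (Subtype.ext hgf ▸ hg)

lemma S13.contract (hG : G.S13) (hu : G.deg u = 2) (hv : G.deg v = 2) :
    (G.contract huv he hpar).S13 := by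
  refine ⟨hG.1.contract huv he hpar, fun a => ?_, hG.2.2.contract huv he hpar hu hv⟩
  by_cases ha : a = ⟨u, huv⟩
  · rw [ha, deg_contract_left huv he hpar hu hv]
    omega
  · rw [deg_contract_of_ne huv he hpar ha]
    exact hG.2.1 a

end Contract

end Multigraph

open Multigraph in
/-- In a minimum counterexample in `S_{1,3}` to the
2-Decomposition Conjecture, no two vertices of degree 2 are adjacent. -/
theorem stmt_11 {V E : Type} [Finite V] [Finite E] (G : Multigraph V E)
    (hG : G.MinCex) :
    ∀ u v : V, G.deg u = 2 → G.deg v = 2 → ¬ G.Adj u v := by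
  rintro u v hu hv ⟨e, -, he⟩
  obtain ⟨hS13, hTM, hmin⟩ := hG
  have huv := ne_of_ends_eq he
  by_cases hpar : ∀ f, G.ends f = s(u, v) → f = e
  · have hphi : (G.contract huv he hpar).phi < G.phi :=
      Nat.add_lt_add (Finite.card_subtype_lt (not_not.mpr rfl))
        (Finite.card_subtype_lt (not_not.mpr rfl))
    refine hTM (HasTM.of_contract huv he hpar (by_contra fun h => ?_) hu hv)
    exact (hmin _ _ inferInstance inferInstance _ (hS13.contract huv he hpar hu hv) h).not_gt hphi
  · obtain ⟨f, hf, hfe⟩ : ∃ f, G.ends f = s(u, v) ∧ f ≠ e := by simpa using hpar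
    exact hTM (hasTM_of_parallel hS13.1 he hf hfe hu hv)
end
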